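/- arXiv:2208.05264 — 2 statements merged into one kernel-verified Lean document; each statement's English description precedes it below -/
import Mathlib

section
/- Let l > 0 and 0 ≤ s_t ≤ 1 and B ≥ 1 be real numbers, let ε ≥ 0, and set t = 2^l / B and s = 2^{l·(1−s_t)} / t. Then for every real p with 1/(1 + s·e^ε) ≤ p < 1, the ratio ((1−p)·2^{−l·(1−s_t)}) / (p/t + (1−p)·2^{−l}) is at most e^ε. (This is the upper privacy-ratio bound P₁₁/P₀₁ ≤ e^ε in the proof of Theorem 3.1, establishing that flipping probability P_flip ≥ 1/(1+s·e^ε) suffices for the ε-local-differential-privacy upper bound.) -/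
/-- Upper privacy-ratio bound `P₁₁/P₀₁ ≤ e^ε` (Theorem 3.1): for Bloom filter
length `l > 0`, similarity threshold `s_t ∈ [0,1]`, number of buckets `B ≥ 1`,
privacy budget `ε ≥ 0`, with `t = 2^l / B` and `s = 2^{l(1-s_t)} / t`, any
flipping probability `p` with `1/(1 + s·e^ε) ≤ p < 1` yields
`((1-p)·2^{-l(1-s_t)}) / (p/t + (1-p)·2^{-l}) ≤ e^ε`. -/
theorem stmt0 (l s_t B ε t s p : ℝ)
    (hl : 0 < l) (hst0 : 0 ≤ s_t) (hst1 : s_t ≤ 1) (hB : 1 ≤ B) (hε : 0 ≤ ε)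
    (ht : t = (2:ℝ) ^ l / B) (hs : s = (2:ℝ) ^ (l * (1 - s_t)) / t)
    (hp0 : 1 / (1 + s * Real.exp ε) ≤ p) (hp1 : p < 1) :
    ((1 - p) * (2:ℝ) ^ (-(l * (1 - s_t)))) / (p / t + (1 - p) * (2:ℝ) ^ (-l))
      ≤ Real.exp ε := by
  have ha : (0:ℝ) < (2:ℝ) ^ (l * (1 - s_t)) := Real.rpow_pos_of_pos (by norm_num) _
  have h2l : (0:ℝ) < (2:ℝ) ^ l := Real.rpow_pos_of_pos (by norm_num) _
  have ht0 : 0 < t := by rw [ht]; positivity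
  have hs0 : 0 < s := by rw [hs]; positivity
  have hexp : (0:ℝ) < Real.exp ε := Real.exp_pos ε
  have hden : (0:ℝ) < 1 + s * Real.exp ε := by positivity
  have hp_pos : 0 < p := lt_of_lt_of_le (by positivity) hp0
  have hkey : 1 - p ≤ p * s * Real.exp ε := by
    rw [div_le_iff₀ hden] at hp0
    nlinarith
  have hDl : (0:ℝ) < (2:ℝ) ^ (-l) := Real.rpow_pos_of_pos (by norm_num) _
  have hD : 0 < p / t + (1 - p) * (2:ℝ) ^ (-l) := by
    have : 0 < p / t := by positivity
    nlinarith
  rw [div_le_iff₀ hD, Real.rpow_neg (by norm_num : (0:ℝ) ≤ 2)]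
  have hst : s * t = (2:ℝ) ^ (l * (1 - s_t)) := by
    rw [hs]; field_simp
  have h1 : (1 - p) * ((2:ℝ) ^ (l * (1 - s_t)))⁻¹ ≤ Real.exp ε * (p / t) := by
    rw [inv_eq_one_div, mul_one_div, div_le_iff₀ ha]
    calc 1 - p ≤ p * s * Real.exp ε := hkey
      _ = Real.exp ε * (p / t) * (s * t) := by field_simp
      _ = Real.exp ε * (p / t) * (2:ℝ) ^ (l * (1 - s_t)) := by rw [hst]
  have h2 : 0 ≤ Real.exp ε * ((1 - p) * (2:ℝ) ^ (-l)) := by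
    have : 0 ≤ 1 - p := by linarith
    positivity
  nlinarith [h1, h2]
end

section
/- Let B ≥ 1 be a natural number and let p be a real number with 0 < p ≤ 1/2. For i : Fin B and v : Fin B → Bool, let d(i,v) be the number of coordinates j such that v j differs from the indicator of (j = i), and define P_p(i,v) = p^{d(i,v)}·(1−p)^{B−d(i,v)}. Then for all bucket indices i, i' : Fin B and all outputs v : Fin B → Bool, P_p(i,v) ≤ ((1−p)/p)² · P_p(i',v). (This is the likelihood-ratio bound for the randomized-response step applied to one-hot bucket vectors in Algorithm 2, where two different inputs change the output probability by at most two bit flips.) -/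
/-- Hamming distance of an output vector `v` to the one-hot vector of bucket
index `i`. -/
def hamDist {B : ℕ} (i : Fin B) (v : Fin B → Bool) : ℕ :=
  (Finset.univ.filter (fun j : Fin B => v j ≠ (if j = i then true else false))).card

/-- Output probability of randomized response with flipping probability `p`
applied to the one-hot vector of bucket index `i`. -/
noncomputable def rrProb {B : ℕ} (p : ℝ) (i : Fin B) (v : Fin B → Bool) : ℝ :=
  p ^ hamDist i v * (1 - p) ^ (B - hamDist i v)

lemma hamDist_le {B : ℕ} (i i' : Fin B) (v : Fin B → Bool) :
    hamDist i' v ≤ hamDist i v + 2 := by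
  have hsub : (Finset.univ.filter (fun j : Fin B => v j ≠ (if j = i' then true else false)))
      ⊆ (Finset.univ.filter (fun j : Fin B => v j ≠ (if j = i then true else false))) ∪ {i, i'} := by
    intro j hj
    simp only [Finset.mem_filter, Finset.mem_union, Finset.mem_insert, Finset.mem_singleton,
      Finset.mem_univ, true_and] at hj ⊢
    by_cases hji : j = i
    · right; left; exact hji
    by_cases hji' : j = i'
    · right; right; exact hji'
    · left; simpa [hji, hji'] using hj
  calc hamDist i' v ≤ ((Finset.univ.filter
        (fun j : Fin B => v j ≠ (if j = i then true else false))) ∪ ({i, i'} : Finset (Fin B))).card :=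
        Finset.card_le_card hsub
    _ ≤ hamDist i v + ({i, i'} : Finset (Fin B)).card := Finset.card_union_le _ _
    _ ≤ hamDist i v + 2 := by
        have : ({i, i'} : Finset (Fin B)).card ≤ 2 :=
          le_trans (Finset.card_insert_le _ _) (by simp)
        omega

/-- Likelihood-ratio bound for randomized response on one-hot bucket vectors:
if `0 < p ≤ 1/2`, then for all bucket indices `i, i'` and outputs `v`,
`P_p(i,v) ≤ ((1-p)/p)² · P_p(i',v)`. -/
theorem stmt9 (B : ℕ) (hB : 1 ≤ B) (p : ℝ) (hp0 : 0 < p) (hp1 : p ≤ 1 / 2)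
    (i i' : Fin B) (v : Fin B → Bool) :
    rrProb p i v ≤ ((1 - p) / p) ^ 2 * rrProb p i' v := by
  have hq0 : (0:ℝ) < 1 - p := by linarith
  have hpq : p ≤ 1 - p := by linarith
  set d := hamDist i v with hd
  set d' := hamDist i' v with hd'
  have hdB : d ≤ B := by
    simpa [hd, hamDist] using (Finset.card_filter_le Finset.univ
      (fun j : Fin B => v j ≠ (if j = i then true else false)))
  have hd'B : d' ≤ B := by
    simpa [hd', hamDist] using (Finset.card_filter_le Finset.univ
      (fun j : Fin B => v j ≠ (if j = i' then true else false)))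
  have hle : d' ≤ d + 2 := hamDist_le i i' v
  set m := d + 2 - d' with hm
  have hm1 : d + 2 = d' + m := by omega
  rw [rrProb, rrProb, ← hd, ← hd', div_pow, div_mul_eq_mul_div,
    le_div_iff₀ (pow_pos hp0 2)]
  have e2 : (1-p)^m * (1-p)^(B-d) = (1-p)^(B-d'+2) := by
    rw [← pow_add]; congr 1; omega
  calc p ^ d * (1-p) ^ (B-d) * p ^ 2
      = p ^ (d' + m) * (1-p) ^ (B-d) := by rw [← hm1]; ring
    _ = p ^ d' * p ^ m * (1-p) ^ (B-d) := by rw [pow_add]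
    _ ≤ p ^ d' * (1-p) ^ m * (1-p) ^ (B-d) := by
        gcongr
    _ = p ^ d' * ((1-p)^m * (1-p)^(B-d)) := by ring
    _ = p ^ d' * (1-p)^(B-d'+2) := by rw [e2]
    _ = (1-p)^2 * (p ^ d' * (1-p)^(B-d')) := by rw [pow_add]; ring
end
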